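/- Under the same Sturm–Liouville setup, if λ_n = -d/c ≠ λ_m (so cλ_n+d = 0, which forces y_n(1)=0), aλ_n+b ≠ 0, and c·conj(λ_m)+d ≠ 0, then ∫₀¹ y_n conj(y_m) dx = -(ad-bc)·y_n'(1)·conj(y_m(1)) / ((aλ_n+b)(c·conj(λ_m)+d)). -/

import Mathlib

open MeasureTheory Set

/-- Lemma 2.1(a): inner product of two eigenfunctions of the Sturm–Liouville problem
with eigenparameter-dependent boundary condition, in the case `λn = -d/c ≠ λm`. -/
theorem eigenfunction_inner_product_critical
    (a b c d β : ℝ) (habcd : a * d - b * c < 0) (hac : a * c ≠ 0)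
    (hβ0 : 0 ≤ β) (hβπ : β < Real.pi)
    (q : ℝ → ℝ) (hq : ContinuousOn q (Icc (0:ℝ) 1))
    (lamn lamm : ℂ) (hlam : lamn ≠ (starRingEnd ℂ) lamm)
    (hcn : c * lamn + d = 0) (han : a * lamn + b ≠ 0) (hcm : c * (starRingEnd ℂ) lamm + d ≠ 0)
    (yn yn' yn'' ym ym' ym'' : ℝ → ℂ)
    (hyn : ∀ x ∈ Icc (0:ℝ) 1, HasDerivAt yn (yn' x) x)
    (hyn' : ∀ x ∈ Icc (0:ℝ) 1, HasDerivAt yn' (yn'' x) x)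
    (hyn'' : ContinuousOn yn'' (Icc (0:ℝ) 1))
    (hym : ∀ x ∈ Icc (0:ℝ) 1, HasDerivAt ym (ym' x) x)
    (hym' : ∀ x ∈ Icc (0:ℝ) 1, HasDerivAt ym' (ym'' x) x)
    (hym'' : ContinuousOn ym'' (Icc (0:ℝ) 1))
    (hoden : ∀ x ∈ Icc (0:ℝ) 1, -yn'' x + (q x : ℂ) * yn x = lamn * yn x)
    (hodem : ∀ x ∈ Icc (0:ℝ) 1, -ym'' x + (q x : ℂ) * ym x = lamm * ym x)
    (hbc0n : yn 0 * (Real.cos β : ℂ) = yn' 0 * (Real.sin β : ℂ))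
    (hbc0m : ym 0 * (Real.cos β : ℂ) = ym' 0 * (Real.sin β : ℂ))
    (hbc1n : (a * lamn + b) * yn 1 = (c * lamn + d) * yn' 1)
    (hbc1m : (a * lamm + b) * ym 1 = (c * lamm + d) * ym' 1) :
    ∫ x in (0:ℝ)..1, yn x * (starRingEnd ℂ) (ym x)
      = -((a * d - b * c : ℝ) : ℂ) * (yn' 1 * (starRingEnd ℂ) (ym 1))
          / ((a * lamn + b) * (c * (starRingEnd ℂ) lamm + d)) := by
  -- `yn 1 = 0`
  have hyn1 : yn 1 = 0 := by
    rw [hcn, zero_mul] at hbc1n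
    exact (mul_eq_zero.mp hbc1n).resolve_left han
  -- conjugated boundary condition for `ym` at 0
  have hm0 : (starRingEnd ℂ) (ym 0) * (Real.cos β : ℂ) = (starRingEnd ℂ) (ym' 0) * (Real.sin β : ℂ) := by
    have h := congrArg (starRingEnd ℂ) hbc0m
    simpa only [map_mul, Complex.conj_ofReal] using h
  -- the Wronskian-type quantity vanishes at 0
  have hW0 : yn' 0 * (starRingEnd ℂ) (ym 0) - yn 0 * (starRingEnd ℂ) (ym' 0) = 0 := by
    have hs : ((Real.sin β : ℂ))^2 + ((Real.cos β : ℂ))^2 = 1 := by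
      exact_mod_cast Real.sin_sq_add_cos_sq β
    have h1 : (yn' 0 * (starRingEnd ℂ) (ym 0) - yn 0 * (starRingEnd ℂ) (ym' 0)) * (Real.sin β : ℂ) = 0 := by
      linear_combination (-((starRingEnd ℂ) (ym 0))) * hbc0n + yn 0 * hm0
    have h2 : (yn' 0 * (starRingEnd ℂ) (ym 0) - yn 0 * (starRingEnd ℂ) (ym' 0)) * (Real.cos β : ℂ) = 0 := by
      linear_combination (-((starRingEnd ℂ) (ym' 0))) * hbc0n + yn' 0 * hm0
    linear_combination (Real.sin β : ℂ) * h1 + (Real.cos β : ℂ) * h2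
      - (yn' 0 * (starRingEnd ℂ) (ym 0) - yn 0 * (starRingEnd ℂ) (ym' 0)) * hs
  -- derivative of the Wronskian
  have hF : ∀ x ∈ uIcc (0:ℝ) 1,
      HasDerivAt (fun x => yn' x * (starRingEnd ℂ) (ym x) - yn x * (starRingEnd ℂ) (ym' x))
        (((starRingEnd ℂ) lamm - lamn) * (yn x * (starRingEnd ℂ) (ym x))) x := by
    rw [uIcc_of_le (by norm_num : (0:ℝ) ≤ 1)]
    intro x hx
    have hyms : HasDerivAt (fun t => (starRingEnd ℂ) (ym t)) ((starRingEnd ℂ) (ym' x)) x := (hym x hx).star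
    have hyms' : HasDerivAt (fun t => (starRingEnd ℂ) (ym' t)) ((starRingEnd ℂ) (ym'' x)) x := (hym' x hx).star
    have h1 := ((hyn' x hx).mul hyms).sub ((hyn x hx).mul hyms')
    convert h1 using 1
    case e'_4 => rfl
    case e'_8 => rfl
    have e1 : yn'' x = (q x : ℂ) * yn x - lamn * yn x := by
      linear_combination - hoden x hx
    have e2 : (starRingEnd ℂ) (ym'' x) = (q x : ℂ) * (starRingEnd ℂ) (ym x) - (starRingEnd ℂ) lamm * (starRingEnd ℂ) (ym x) := by
      have h := congrArg (starRingEnd ℂ) (hodem x hx)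
      simp only [map_add, map_neg, map_mul, Complex.conj_ofReal] at h
      linear_combination - h
    rw [e1, e2]; ring
  -- integrability of the integrand
  have hcyn : ContinuousOn yn (Icc (0:ℝ) 1) := fun x hx =>
    (hyn x hx).continuousAt.continuousWithinAt
  have hcym : ContinuousOn ym (Icc (0:ℝ) 1) := fun x hx =>
    (hym x hx).continuousAt.continuousWithinAt
  have hcont : ContinuousOn (fun x => ((starRingEnd ℂ) lamm - lamn) * (yn x * (starRingEnd ℂ) (ym x)))
      (uIcc (0:ℝ) 1) := by
    rw [uIcc_of_le (by norm_num : (0:ℝ) ≤ 1)]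
    exact continuousOn_const.mul (hcyn.mul hcym.star)
  have hint : IntervalIntegrable (fun x => ((starRingEnd ℂ) lamm - lamn) * (yn x * (starRingEnd ℂ) (ym x)))
      MeasureTheory.volume 0 1 := hcont.intervalIntegrable
  have key := intervalIntegral.integral_eq_sub_of_hasDerivAt hF hint
  rw [intervalIntegral.integral_const_mul] at key
  have key2 : ((starRingEnd ℂ) lamm - lamn) * ∫ x in (0:ℝ)..1, yn x * (starRingEnd ℂ) (ym x)
      = yn' 1 * (starRingEnd ℂ) (ym 1) := by
    rw [key, hyn1, hW0]; ring
  -- final algebra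
  have hDeq : ((a:ℂ) * lamn + b) * ((c:ℂ) * (starRingEnd ℂ) lamm + d)
      = -((a * d - b * c : ℝ) : ℂ) * ((starRingEnd ℂ) lamm - lamn) := by
    push_cast
    linear_combination ((a:ℂ) * (starRingEnd ℂ) lamm + b) * hcn
  rw [eq_div_iff (mul_ne_zero han hcm), hDeq]
  linear_combination (-((a * d - b * c : ℝ) : ℂ)) * key2
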